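/- arXiv:1006.5551 — 4 statements merged into one kernel-verified Lean document; each statement's English description precedes it below -/
import Mathlib

section
/- Let B be a closed Euclidean ball in ℝⁿ with center c_B satisfying r_B ≤ min(1, 1/|c_B|) (an admissible ball). If x ∈ ℝⁿ is such that the ball B(x, min(1, 1/|x|)) intersects B, then |x - c_B| ≤ 4·min(1, 1/|c_B|). -/
/-! Since `mrad t = (max 1 t)⁻¹`, the two admissible radii are at most `1`, so the centres are at
distance `d ≤ mrad ‖x‖ + mrad ‖c_B‖ ≤ 2`. Then `max 1 ‖c_B‖ ≤ max 1 ‖x‖ + 2 ≤ 3 max 1 ‖x‖`, i.e.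
`mrad ‖x‖ ≤ 3 mrad ‖c_B‖`, and `d ≤ 4 mrad ‖c_B‖` follows. -/

/-- `mrad t = min(1, 1/t)` with the convention that it equals `1` when `t ≤ 1`
(in particular for a ball centred at the origin). -/
noncomputable def mrad (t : ℝ) : ℝ := if t ≤ 1 then 1 else 1 / t

theorem mrad_eq_inv_max (t : ℝ) : mrad t = (max 1 t)⁻¹ := by
  unfold mrad
  split_ifs with ht
  · rw [max_eq_left ht, inv_one]
  · rw [max_eq_right (not_le.mp ht).le, one_div]

theorem mrad_le_one (t : ℝ) : mrad t ≤ 1 := by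
  rw [mrad_eq_inv_max]
  exact inv_le_one_of_one_le₀ (le_max_left 1 t)

theorem mrad_le_mul_mrad_of_le_add {s t k : ℝ} (hk : 0 ≤ k) (h : t ≤ s + k) :
    mrad s ≤ (1 + k) * mrad t := by
  have hs : 1 ≤ max 1 s := le_max_left 1 s
  have hmax : max 1 t ≤ (1 + k) * max 1 s := by
    rcases le_total t 1 with ht | ht
    · nlinarith [max_eq_left ht]
    · nlinarith [max_eq_right ht, le_max_right 1 s]
  rw [mrad_eq_inv_max, mrad_eq_inv_max, ← div_eq_mul_inv,
    le_div_iff₀ (by positivity), mul_comm, ← div_eq_mul_inv, div_le_iff₀ (by positivity)]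
  linarith

theorem stmt_2 (n : ℕ) (cB x : EuclideanSpace ℝ (Fin n)) (rB : ℝ)
    (hr : rB ≤ mrad ‖cB‖)
    (h : (Metric.closedBall x (mrad ‖x‖) ∩ Metric.closedBall cB rB).Nonempty) :
    ‖x - cB‖ ≤ 4 * mrad ‖cB‖ := by
  have hd : ‖x - cB‖ ≤ mrad ‖x‖ + mrad ‖cB‖ := by
    rw [← dist_eq_norm]
    linarith [Metric.dist_le_add_of_nonempty_closedBall_inter_closedBall h]
  have hd2 : ‖x - cB‖ ≤ 2 := by linarith [mrad_le_one ‖x‖, mrad_le_one ‖cB‖]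
  have hc : ‖cB‖ ≤ ‖x‖ + 2 := by linarith [norm_le_norm_add_norm_sub' cB x, norm_sub_rev cB x]
  linarith [mrad_le_mul_mrad_of_le_add zero_le_two hc]
end

section
/- Let a ∈ L¹(γ) be supported in an admissible ball B with ∫ a dγ = 0 and ∫|a| dγ ≤ 1. Then |∫ a(y) dy| ≤ C·r_B·(1 + |c_B|)·γ₀(c_B)⁻¹, where the left integral is with respect to Lebesgue measure and γ₀ is the Gaussian density. -/
/-!
Since `dx = γ₀⁻¹ dγ`, the Lebesgue integral of `a` is `∫ a γ₀⁻¹ dγ`, and because `a` has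
Gaussian mean zero we may replace `γ₀⁻¹` by `γ₀⁻¹ - γ₀(c_B)⁻¹`. On `B` this difference is
`(e^d - 1) γ₀(c_B)⁻¹` with `d = |x|² - |c_B|²`, and admissibility of `B` gives
`|d| ≤ r_B (2|c_B| + r_B) ≤ min(3, 2 r_B (1 + |c_B|))`, so `|e^d - 1| ≤ |d| e^{|d|}` is at most
`2 e³ r_B (1 + |c_B|)`. Integrating against `|a| dγ`, of mass at most one, gives the claim.
-/

open MeasureTheory
open scoped ENNReal

/-- Gaussian density `γ₀(x) = π^{-n/2} e^{-|x|²}` on ℝⁿ. -/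
noncomputable def gaussDensity (n : ℕ) (x : EuclideanSpace ℝ (Fin n)) : ℝ :=
  Real.pi ^ (-(n : ℝ) / 2) * Real.exp (-‖x‖ ^ 2)

/-- The Gauss measure `γ` on ℝⁿ. -/
noncomputable def gaussMeasure (n : ℕ) : Measure (EuclideanSpace ℝ (Fin n)) :=
  volume.withDensity fun x => ENNReal.ofReal (gaussDensity n x)

lemma le_one_of_le_mrad {r t : ℝ} (h : r ≤ mrad t) : r ≤ 1 := by
  unfold mrad at h
  split_ifs at h with ht
  · exact h
  · exact h.trans ((div_le_one (by linarith)).2 (by linarith))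

lemma mul_le_one_of_le_mrad {r t : ℝ} (ht : 0 ≤ t) (h : r ≤ mrad t) : r * t ≤ 1 := by
  unfold mrad at h
  split_ifs at h with ht1
  · nlinarith
  · rwa [le_div_iff₀ (by linarith)] at h

lemma Real.abs_exp_sub_one_le_mul_exp_abs (d : ℝ) : |Real.exp d - 1| ≤ |d| * Real.exp |d| := by
  rcases le_total 0 d with hd | hd
  · have h1 : 1 - d ≤ Real.exp (-d) := Real.one_sub_le_exp_neg d
    have h2 : Real.exp (-d) * Real.exp d = 1 := by rw [← Real.exp_add, neg_add_cancel, Real.exp_zero]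
    rw [abs_of_nonneg hd, abs_of_nonneg (by linarith [Real.add_one_le_exp d])]
    nlinarith [Real.exp_pos d]
  · rw [abs_of_nonpos hd, abs_of_nonpos (by linarith [Real.exp_le_one_iff.2 hd])]
    nlinarith [Real.add_one_le_exp d, Real.one_le_exp (neg_nonneg.2 hd)]

lemma abs_norm_sq_sub_norm_sq_le {E : Type*} [SeminormedAddCommGroup E] {x c : E} {r : ℝ}
    (hx : x ∈ Metric.closedBall c r) : |‖x‖ ^ 2 - ‖c‖ ^ 2| ≤ r * (2 * ‖c‖ + r) := by
  have hxc : |‖x‖ - ‖c‖| ≤ r := (abs_norm_sub_norm_le x c).trans (mem_closedBall_iff_norm.1 hx)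
  have hsum : ‖x‖ + ‖c‖ ≤ 2 * ‖c‖ + r := by linarith [(abs_le.1 hxc).2]
  rw [sq_sub_sq, abs_mul, abs_of_nonneg (by positivity : 0 ≤ ‖x‖ + ‖c‖), mul_comm]
  exact mul_le_mul hxc hsum (by positivity) ((abs_nonneg _).trans hxc)

lemma gaussDensity_pos (n : ℕ) (x : EuclideanSpace ℝ (Fin n)) : 0 < gaussDensity n x := by
  unfold gaussDensity
  positivity

lemma measurable_gaussDensity (n : ℕ) : Measurable (gaussDensity n) := by
  unfold gaussDensity
  fun_prop

lemma gaussDensity_inv_eq (n : ℕ) (x c : EuclideanSpace ℝ (Fin n)) :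
    (gaussDensity n x)⁻¹ = Real.exp (‖x‖ ^ 2 - ‖c‖ ^ 2) * (gaussDensity n c)⁻¹ := by
  have h : gaussDensity n c = gaussDensity n x * Real.exp (‖x‖ ^ 2 - ‖c‖ ^ 2) := by
    unfold gaussDensity
    rw [mul_assoc, ← Real.exp_add]
    ring_nf
  rw [h, mul_inv, mul_left_comm, mul_inv_cancel₀ (Real.exp_pos _).ne', mul_one]

lemma integral_gaussMeasure (n : ℕ) (f : EuclideanSpace ℝ (Fin n) → ℝ) :
    ∫ x, f x ∂gaussMeasure n = ∫ x, gaussDensity n x * f x := by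
  rw [gaussMeasure, integral_withDensity_eq_integral_toReal_smul
    (measurable_gaussDensity n).ennreal_ofReal (ae_of_all _ fun _ => ENNReal.ofReal_lt_top)]
  simp only [ENNReal.toReal_ofReal (gaussDensity_pos n _).le, smul_eq_mul]

lemma integral_mul_inv_gaussDensity (n : ℕ) (f : EuclideanSpace ℝ (Fin n) → ℝ) :
    ∫ x, f x * (gaussDensity n x)⁻¹ ∂gaussMeasure n = ∫ x, f x := by
  rw [integral_gaussMeasure]
  congr 1 with x
  rw [mul_left_comm, mul_inv_cancel₀ (gaussDensity_pos n x).ne', mul_one]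

lemma abs_inv_gaussDensity_sub_le {n : ℕ} {c x : EuclideanSpace ℝ (Fin n)} {r : ℝ}
    (hr : r ≤ mrad ‖c‖) (hx : x ∈ Metric.closedBall c r) :
    |(gaussDensity n x)⁻¹ - (gaussDensity n c)⁻¹|
      ≤ 2 * Real.exp 3 * r * (1 + ‖c‖) * (gaussDensity n c)⁻¹ := by
  set d := ‖x‖ ^ 2 - ‖c‖ ^ 2
  have hr0 : 0 ≤ r := dist_nonneg.trans hx
  have hr1 : r ≤ 1 := le_one_of_le_mrad hr
  have hrc : r * ‖c‖ ≤ 1 := mul_le_one_of_le_mrad (norm_nonneg c) hr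
  have hd : |d| ≤ r * (2 * ‖c‖ + r) := abs_norm_sq_sub_norm_sq_le hx
  have hd_lin : |d| ≤ 2 * r * (1 + ‖c‖) := by nlinarith
  have hd_three : |d| ≤ 3 := by nlinarith
  have hexp : |Real.exp d - 1| ≤ 2 * Real.exp 3 * r * (1 + ‖c‖) :=
    calc |Real.exp d - 1| ≤ |d| * Real.exp |d| := Real.abs_exp_sub_one_le_mul_exp_abs d
      _ ≤ 2 * r * (1 + ‖c‖) * Real.exp 3 := by gcongr
      _ = 2 * Real.exp 3 * r * (1 + ‖c‖) := by ring
  have hc := (gaussDensity_pos n c).le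
  rw [gaussDensity_inv_eq n x c, ← sub_one_mul, abs_mul, abs_of_nonneg (inv_nonneg.2 hc)]
  gcongr

lemma abs_integral_mul_le_of_integral_eq_zero {α : Type*} [MeasurableSpace α] {μ : Measure α}
    {f g : α → ℝ} {c M : ℝ} (hf : Integrable f μ) (hf0 : ∫ x, f x ∂μ = 0)
    (hg : AEStronglyMeasurable g μ) (hgc : ∀ x ∈ Function.support f, |g x - c| ≤ M) :
    |∫ x, f x * g x ∂μ| ≤ M * ∫ x, |f x| ∂μ := by
  have hpt : ∀ x, ‖f x * (g x - c)‖ ≤ M * |f x| := by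
    intro x
    by_cases hx : f x = 0
    · simp [hx]
    · rw [Real.norm_eq_abs, abs_mul, mul_comm M]
      exact mul_le_mul_of_nonneg_left (hgc x hx) (abs_nonneg _)
  have hbound : Integrable (fun x => M * |f x|) μ := hf.abs.const_mul M
  have hfg : Integrable (fun x => f x * (g x - c)) μ :=
    hbound.mono' (hf.1.mul (hg.sub aestronglyMeasurable_const)) (ae_of_all _ hpt)
  have hshift : ∫ x, f x * g x ∂μ = ∫ x, f x * (g x - c) ∂μ := by
    have h : (fun x => f x * g x) = fun x => f x * (g x - c) + f x * c := by ext x; ring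
    rw [h, integral_add hfg (hf.mul_const c), integral_mul_const, hf0, zero_mul, add_zero]
  rw [hshift, ← Real.norm_eq_abs, ← integral_const_mul]
  exact norm_integral_le_of_norm_le hbound (ae_of_all _ hpt)

theorem stmt_7 (n : ℕ) :
    ∃ C > 0, ∀ (cB : EuclideanSpace ℝ (Fin n)) (rB : ℝ)
      (a : EuclideanSpace ℝ (Fin n) → ℝ),
      0 < rB → rB ≤ mrad ‖cB‖ →
      Function.support a ⊆ Metric.closedBall cB rB →
      Integrable a (gaussMeasure n) →
      (∫ x, a x ∂gaussMeasure n) = 0 →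
      (∫ x, |a x| ∂gaussMeasure n) ≤ 1 →
      |∫ x, a x| ≤ C * rB * (1 + ‖cB‖) * (gaussDensity n cB)⁻¹ := by
  refine ⟨2 * Real.exp 3, by positivity, fun cB rB a hr hrB hsupp ha ha0 ha1 => ?_⟩
  have hM : 0 ≤ 2 * Real.exp 3 * rB * (1 + ‖cB‖) * (gaussDensity n cB)⁻¹ := by
    have := gaussDensity_pos n cB
    positivity
  rw [← integral_mul_inv_gaussDensity]
  calc |∫ x, a x * (gaussDensity n x)⁻¹ ∂gaussMeasure n|
      ≤ 2 * Real.exp 3 * rB * (1 + ‖cB‖) * (gaussDensity n cB)⁻¹ * ∫ x, |a x| ∂gaussMeasure n :=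
        abs_integral_mul_le_of_integral_eq_zero ha ha0
          (measurable_gaussDensity n).inv.aestronglyMeasurable
          fun x hx => abs_inv_gaussDensity_sub_le hrB (hsupp hx)
    _ ≤ 2 * Real.exp 3 * rB * (1 + ‖cB‖) * (gaussDensity n cB)⁻¹ := mul_le_of_le_one_right hM ha1
end

section
/- Let g ∈ L¹(λ) on ℝⁿ be supported in a ball B with ∫ g dλ = 0. Then for every x ∉ 2B, every C¹ function φ supported in the unit ball with |φ| ≤ 1 and |∇φ| ≤ 1, and every t ≥ d(x, B), one has |φ_t * g(x)| ≤ C·r_B·d(x,B)^{-n-1}·‖g‖_{L¹(λ)}, where φ_t(z) = t^{-n}φ(z/t) and C depends only on n. In particular, sup over such φ and all t > 0 of |φ_t * g(x)| is at most C·‖g‖_{L¹(λ)}/λ(B) for x ∉ 2B. -/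
/-!
Since `∫ g = 0`, one may subtract the constant `φ_t (x - c_B)` from the kernel, and
`y ↦ φ_t (x - y)` is `t⁻ⁿ⁻¹`-Lipschitz, so `|φ_t * g (x)| ≤ r_B t⁻ⁿ⁻¹ ‖g‖₁` for every `t > 0`.
For `t ≥ d(x, B)` this is the first bound. For the second, either `t < d(x, B)`, where
`φ_t * g (x)` vanishes, or `t ≥ d(x, B) > r_B`, where `r_B t⁻ⁿ⁻¹ ≤ r_B⁻ⁿ = λ(B(0,1)) / λ(B)`.
-/

open MeasureTheory Metric Function Module
open scoped NNReal

/-- The paper's `φ_t`. -/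
noncomputable def dilate {E : Type*} [NormedAddCommGroup E] [NormedSpace ℝ E]
    (n : ℕ) (t : ℝ) (φ : E → ℝ) (z : E) : ℝ :=
  (t ^ n)⁻¹ * φ (t⁻¹ • z)

section Metric

variable {X : Type*} [PseudoMetricSpace X]

theorem sub_le_infDist_closedBall {x c : X} {r : ℝ} (hr : 0 ≤ r) :
    dist x c - r ≤ infDist x (closedBall c r) := by
  refine (le_infDist ⟨c, mem_closedBall_self hr⟩).2 fun y hy => ?_
  linarith [dist_triangle x y c, mem_closedBall.1 hy]

theorem lt_infDist_closedBall_of_notMem_closedBall_two_mul {x c : X} {r : ℝ} (hr : 0 ≤ r)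
    (hx : x ∉ closedBall c (2 * r)) :
    r < infDist x (closedBall c r) := by
  have := sub_le_infDist_closedBall (x := x) (c := c) hr
  linarith [not_le.1 (mt mem_closedBall.2 hx)]

variable [MeasurableSpace X] {μ : Measure X}

theorem abs_integral_mul_le_of_integral_eq_zero_s10 {ψ g : X → ℝ} {K : ℝ≥0} {c : X} {r : ℝ}
    (hψ : LipschitzWith K ψ) (hψg : Integrable (fun y => ψ y * g y) μ) (hg : Integrable g μ)
    (hg_supp : support g ⊆ closedBall c r) (hg_int : ∫ y, g y ∂μ = 0) :
    |∫ y, ψ y * g y ∂μ| ≤ K * r * ∫ y, |g y| ∂μ := by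
  have hshift : ∫ y, ψ y * g y ∂μ = ∫ y, (ψ y - ψ c) * g y ∂μ := by
    simp_rw [sub_mul]
    rw [integral_sub hψg (hg.const_mul _), integral_const_mul, hg_int, mul_zero, sub_zero]
  have hpointwise : ∀ y, |(ψ y - ψ c) * g y| ≤ K * r * |g y| := by
    intro y
    by_cases hy : g y = 0
    · simp [hy]
    rw [abs_mul]
    gcongr
    calc |ψ y - ψ c| = dist (ψ y) (ψ c) := rfl
      _ ≤ K * dist y c := hψ.dist_le_mul y c
      _ ≤ K * r := by gcongr; exact mem_closedBall.1 (hg_supp hy)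
  calc |∫ y, ψ y * g y ∂μ| = |∫ y, (ψ y - ψ c) * g y ∂μ| := by rw [hshift]
    _ ≤ ∫ y, |(ψ y - ψ c) * g y| ∂μ := abs_integral_le_integral_abs
    _ ≤ ∫ y, K * r * |g y| ∂μ :=
      integral_mono_of_nonneg (.of_forall fun _ => abs_nonneg _) (hg.abs.const_mul _)
        (.of_forall hpointwise)
    _ = K * r * ∫ y, |g y| ∂μ := integral_const_mul _ _

end Metric

section Dilate

variable {E : Type*} [NormedAddCommGroup E] [NormedSpace ℝ E] {φ : E → ℝ} {n : ℕ} {t : ℝ}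

theorem LipschitzWith.dilate {K : ℝ≥0} (hφ : LipschitzWith K φ) (n : ℕ) (t : ℝ) :
    LipschitzWith (‖(t ^ n)⁻¹‖₊ * (K * ‖t⁻¹‖₊)) (dilate n t φ) :=
  (lipschitzWith_smul _).comp (hφ.comp (lipschitzWith_smul t⁻¹))

theorem abs_dilate_le {M : ℝ} (hφ : ∀ z, |φ z| ≤ M) (z : E) :
    |dilate n t φ z| ≤ |(t ^ n)⁻¹| * M := by
  rw [dilate, abs_mul]
  exact mul_le_mul_of_nonneg_left (hφ _) (abs_nonneg _)

theorem dilate_eq_zero_of_lt_norm (hφ : support φ ⊆ closedBall 0 1) (ht : 0 < t) {z : E}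
    (hz : t < ‖z‖) : dilate n t φ z = 0 := by
  have : t⁻¹ • z ∉ closedBall 0 1 := by
    rw [mem_closedBall_zero_iff, norm_smul, Real.norm_of_nonneg (inv_nonneg.2 ht.le), not_le,
      ← div_eq_inv_mul, one_lt_div ht]
    exact hz
  rw [dilate, notMem_support.1 (mt (@hφ _) this), mul_zero]

variable [MeasurableSpace E] {μ : Measure E} {g : E → ℝ} {c x : E} {r : ℝ}

theorem integral_dilate_sub_mul_eq_zero (hφ : support φ ⊆ closedBall 0 1) (ht : 0 < t)
    (hg_supp : support g ⊆ closedBall c r) (htx : t < infDist x (closedBall c r)) :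
    ∫ y, dilate n t φ (x - y) * g y ∂μ = 0 := by
  refine integral_eq_zero_of_ae (.of_forall fun y => ?_)
  by_cases hy : g y = 0
  · simp [hy]
  have : t < ‖x - y‖ :=
    htx.trans_le (dist_eq_norm x y ▸ infDist_le_dist_of_mem (hg_supp hy))
  simp [dilate_eq_zero_of_lt_norm hφ ht this]

theorem abs_integral_dilate_sub_mul_le [OpensMeasurableSpace E] {K : ℝ≥0} {M : ℝ}
    (hφ : LipschitzWith K φ) (hφ_bdd : ∀ z, |φ z| ≤ M) (ht : 0 < t) (hg : Integrable g μ)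
    (hg_supp : support g ⊆ closedBall c r) (hg_int : ∫ y, g y ∂μ = 0) :
    |∫ y, dilate n t φ (x - y) * g y ∂μ| ≤ K / t ^ (n + 1) * r * ∫ y, |g y| ∂μ := by
  have hlip : LipschitzWith (‖(t ^ n)⁻¹‖₊ * (K * ‖t⁻¹‖₊) * 1) fun y => dilate n t φ (x - y) :=
    (hφ.dilate n t).comp (IsometryEquiv.subLeft x).isometry.lipschitz
  have hint : Integrable (fun y => dilate n t φ (x - y) * g y) μ :=
    hg.bdd_mul hlip.continuous.aestronglyMeasurable
      (.of_forall fun y => abs_dilate_le hφ_bdd (x - y))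
  have hK : ((‖(t ^ n)⁻¹‖₊ * (K * ‖t⁻¹‖₊) * 1 : ℝ≥0) : ℝ) = K / t ^ (n + 1) := by
    simp only [NNReal.coe_mul, coe_nnnorm, mul_one, norm_inv, norm_pow,
      Real.norm_of_nonneg ht.le, pow_succ]
    field_simp
  rw [← hK]
  exact abs_integral_mul_le_of_integral_eq_zero_s10 hlip hint hg hg_supp hg_int

theorem abs_integral_dilate_sub_mul_le_of_infDist_le [OpensMeasurableSpace E] {K : ℝ≥0} {M : ℝ}
    (hφ : LipschitzWith K φ) (hφ_bdd : ∀ z, |φ z| ≤ M) (hg : Integrable g μ)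
    (hg_supp : support g ⊆ closedBall c r) (hg_int : ∫ y, g y ∂μ = 0) (hr : 0 ≤ r)
    (hx : 0 < infDist x (closedBall c r)) (ht : infDist x (closedBall c r) ≤ t) :
    |∫ y, dilate n t φ (x - y) * g y ∂μ| ≤
      K * r * infDist x (closedBall c r) ^ (-(n : ℝ) - 1) * ∫ y, |g y| ∂μ := by
  set d := infDist x (closedBall c r)
  have hd : d ^ (-(n : ℝ) - 1) = (d ^ (n + 1))⁻¹ := by
    rw [show -(n : ℝ) - 1 = -((n + 1 : ℕ) : ℝ) by push_cast; ring, Real.rpow_neg hx.le,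
      Real.rpow_natCast]
  calc |∫ y, dilate n t φ (x - y) * g y ∂μ|
      ≤ K / t ^ (n + 1) * r * ∫ y, |g y| ∂μ :=
        abs_integral_dilate_sub_mul_le hφ hφ_bdd (hx.trans_le ht) hg hg_supp hg_int
    _ ≤ K / d ^ (n + 1) * r * ∫ y, |g y| ∂μ := by gcongr
    _ = K * r * d ^ (-(n : ℝ) - 1) * ∫ y, |g y| ∂μ := by rw [hd]; ring

end Dilate

section AddHaar

variable {E : Type*} [NormedAddCommGroup E] [NormedSpace ℝ E] [MeasurableSpace E] [BorelSpace E]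
  [FiniteDimensional ℝ E] (μ : Measure E) [μ.IsAddHaarMeasure]

theorem abs_integral_dilate_sub_mul_le_div_measureReal {φ g : E → ℝ} {c x : E} {r t : ℝ}
    {K : ℝ≥0} {M : ℝ} (hφ : LipschitzWith K φ) (hφ_bdd : ∀ z, |φ z| ≤ M)
    (hφ_supp : support φ ⊆ closedBall 0 1) (hg : Integrable g μ)
    (hg_supp : support g ⊆ closedBall c r) (hg_int : ∫ y, g y ∂μ = 0) (hr : 0 < r)
    (hx : r < infDist x (closedBall c r)) (ht : 0 < t) :
    |∫ y, dilate (finrank ℝ E) t φ (x - y) * g y ∂μ| ≤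
      K * μ.real (ball 0 1) * (∫ y, |g y| ∂μ) / μ.real (closedBall c r) := by
  rcases lt_or_ge t (infDist x (closedBall c r)) with htx | htx
  · rw [integral_dilate_sub_mul_eq_zero hφ_supp ht hg_supp htx, abs_zero]
    positivity
  have hv : 0 < μ.real (ball 0 1) :=
    ENNReal.toReal_pos (measure_ball_pos μ _ one_pos).ne' measure_ball_lt_top.ne
  calc |∫ y, dilate (finrank ℝ E) t φ (x - y) * g y ∂μ|
      ≤ K / t ^ (finrank ℝ E + 1) * r * ∫ y, |g y| ∂μ :=
        abs_integral_dilate_sub_mul_le hφ hφ_bdd ht hg hg_supp hg_int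
    _ ≤ K / r ^ (finrank ℝ E + 1) * r * ∫ y, |g y| ∂μ := by gcongr; exact (hx.trans_le htx).le
    _ = K * μ.real (ball 0 1) * (∫ y, |g y| ∂μ) / μ.real (closedBall c r) := by
      rw [Measure.addHaar_real_closedBall μ c hr.le, pow_succ]
      field_simp

end AddHaar

theorem stmt_10 (n : ℕ) :
    ∃ C > 0, ∀ (cB : EuclideanSpace ℝ (Fin n)) (rB : ℝ)
      (g : EuclideanSpace ℝ (Fin n) → ℝ),
      0 < rB →
      Integrable g volume →
      Function.support g ⊆ Metric.closedBall cB rB →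
      (∫ y, g y) = 0 →
      ∀ x ∉ Metric.closedBall cB (2 * rB),
      ∀ φ : EuclideanSpace ℝ (Fin n) → ℝ,
        ContDiff ℝ 1 φ →
        Function.support φ ⊆ Metric.closedBall 0 1 →
        (∀ z, |φ z| ≤ 1) →
        (∀ z, ‖fderiv ℝ φ z‖ ≤ 1) →
        (∀ t : ℝ, Metric.infDist x (Metric.closedBall cB rB) ≤ t →
          |∫ y, (t ^ n)⁻¹ * φ (t⁻¹ • (x - y)) * g y| ≤
            C * rB * Metric.infDist x (Metric.closedBall cB rB) ^ (-(n : ℝ) - 1) *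
              ∫ y, |g y|) ∧
        (∀ t : ℝ, 0 < t →
          |∫ y, (t ^ n)⁻¹ * φ (t⁻¹ • (x - y)) * g y| ≤
            C * (∫ y, |g y|) / (volume (Metric.closedBall cB rB)).toReal) := by
  set v := volume.real (ball (0 : EuclideanSpace ℝ (Fin n)) 1)
  refine ⟨max 1 v, lt_max_of_lt_left one_pos, ?_⟩
  intro cB rB g hrB hg hg_supp hg_int x hx φ hφ hφ_supp hφ_bdd hφ'
  have hφ_lip : LipschitzWith 1 φ :=
    lipschitzWith_of_nnnorm_fderiv_le (hφ.differentiable one_ne_zero) fun z => by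
      simpa [← NNReal.coe_le_coe] using hφ' z
  have hrx := lt_infDist_closedBall_of_notMem_closedBall_two_mul hrB.le hx
  refine ⟨fun t ht => ?_, fun t ht => ?_⟩
  · calc _ ≤ (1 : ℝ≥0) * rB * infDist x (closedBall cB rB) ^ (-(n : ℝ) - 1) * ∫ y, |g y| :=
          abs_integral_dilate_sub_mul_le_of_infDist_le hφ_lip hφ_bdd hg hg_supp hg_int hrB.le
            (hrB.trans hrx) ht
      _ ≤ _ := by
        gcongr
        · exact Real.rpow_nonneg infDist_nonneg _
        · exact_mod_cast le_max_left 1 v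
  · have h := abs_integral_dilate_sub_mul_le_div_measureReal volume hφ_lip hφ_bdd hφ_supp hg
      hg_supp hg_int hrB hrx ht
    rw [finrank_euclideanSpace_fin] at h
    calc _ ≤ (1 : ℝ≥0) * v * (∫ y, |g y|) / (volume (closedBall cB rB)).toReal := h
      _ ≤ _ := by
        gcongr ?_ * _ / _
        simp
end

section
/- Let B₀ = B(0,1) ⊂ ℝⁿ and let B be a maximal admissible ball (radius exactly min(1, 1/|c_B|)). Define the chain of maximal admissible balls B̃_0 = B(0,1), B̃_1, ..., with centers on the segment [0, c_B], where ρ_j = |c_{B̃_j}| satisfies ρ_0 = 0, ρ_1 = 1, ρ_j − 1/ρ_j = ρ_{j−1}. Let N be minimal such that c_B ∈ B̃_{N−1}. Then N ≤ |c_B|² + 1. -/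
/-!
Squaring `ρ_{j-1} = ρ_j - 1/ρ_j` gives `ρ_{j-1}² = ρ_j² - 2 + 1/ρ_j² ≤ ρ_j² - 1` once `ρ_j ≥ 1`,
so `ρ_j² ≥ j`. By minimality of `N`, the point `b = |c_B|` lies outside `B̃_{N-2}`, i.e.
`b > ρ_{N-2} + 1/ρ_{N-2}`, whence `b² > ρ_{N-2}² + 2 ≥ N`.
-/

lemma one_le_of_sub_inv_nonneg {x : ℝ} (hx : 0 < x) (h : 0 ≤ x - 1 / x) : 1 ≤ x := by
  rw [sub_nonneg, div_le_iff₀ hx] at h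
  nlinarith

lemma sq_sub_inv_add_one_le {x : ℝ} (hx : 1 ≤ x) : (x - 1 / x) ^ 2 + 1 ≤ x ^ 2 := by
  have hx₀ : x ≠ 0 := by positivity
  have hinv : (1 / x) ^ 2 ≤ 1 := pow_le_one₀ (by positivity) (div_le_one_of_le₀ hx (by positivity))
  have hexp : (x - 1 / x) ^ 2 = x ^ 2 - 2 + (1 / x) ^ 2 := by field_simp; ring
  linarith

lemma sq_add_two_le_sq_add_inv {x : ℝ} (hx : 0 < x) : x ^ 2 + 2 ≤ (x + 1 / x) ^ 2 := by
  have hexp : (x + 1 / x) ^ 2 = x ^ 2 + 2 + (1 / x) ^ 2 := by field_simp; ring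
  nlinarith [sq_nonneg (1 / x)]

/-- The junk value `1 / 0 = 0` is why the radius of the unit ball `B̃_0` is given separately. -/
noncomputable def chainRadius (ρ : ℕ → ℝ) (k : ℕ) : ℝ := if k = 0 then 1 else min 1 (1 / ρ k)

section ChainOfBalls

variable {ρ : ℕ → ℝ} (h0 : 0 ≤ ρ 0) (hpos : ∀ j, 0 < ρ (j + 1))
  (hrec : ∀ j, ρ (j + 1) - 1 / ρ (j + 1) = ρ j)
include h0 hpos hrec

lemma one_le_succ (j : ℕ) : 1 ≤ ρ (j + 1) := by
  refine one_le_of_sub_inv_nonneg (hpos j) ?_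
  rw [hrec j]
  cases j with
  | zero => exact h0
  | succ i => exact (hpos i).le

lemma natCast_le_sq (j : ℕ) : (j : ℝ) ≤ ρ j ^ 2 := by
  induction j with
  | zero => simp only [Nat.cast_zero]; positivity
  | succ j ih =>
    have hstep := sq_sub_inv_add_one_le (one_le_succ h0 hpos hrec j)
    rw [hrec j] at hstep
    push_cast
    linarith

lemma succ_le_sq_of_chainRadius_lt {k : ℕ} {b : ℝ} (h : chainRadius ρ k < b - ρ k) :
    (k + 1 : ℝ) ≤ b ^ 2 := by
  cases k with
  | zero =>
    simp only [chainRadius, if_pos] at h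
    push_cast
    nlinarith
  | succ j =>
    have hone := one_le_succ h0 hpos hrec j
    have hr : chainRadius ρ (j + 1) = 1 / ρ (j + 1) :=
      (if_neg j.succ_ne_zero).trans (min_eq_right (div_le_one_of_le₀ hone (by positivity)))
    rw [hr] at h
    have hsq : (ρ (j + 1) + 1 / ρ (j + 1)) ^ 2 < b ^ 2 :=
      pow_lt_pow_left₀ (by linarith) (by positivity) two_ne_zero
    have := sq_add_two_le_sq_add_inv (hpos j)
    have := natCast_le_sq h0 hpos hrec (j + 1)
    push_cast at this ⊢
    linarith

end ChainOfBalls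

theorem stmt_18_general (ρ : ℕ → ℝ) (h0 : ρ 0 = 0)
    (hpos : ∀ j, 1 ≤ j → 0 < ρ j)
    (hrec : ∀ j, 1 ≤ j → ρ j - 1 / ρ j = ρ (j - 1))
    (b : ℝ) (N : ℕ)
    (hmin : ∀ k < N - 1, ¬(b - ρ k ≤ (if k = 0 then 1 else min 1 (1 / ρ k)))) :
    (N : ℝ) ≤ b ^ 2 + 1 := by
  rcases Nat.lt_or_ge N 2 with hN | hN
  · have : (N : ℝ) ≤ 1 := by exact_mod_cast Nat.le_of_lt_succ hN
    nlinarith [sq_nonneg b]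
  · obtain ⟨k, rfl⟩ : ∃ k, N = k + 2 := ⟨N - 2, by omega⟩
    have hout : chainRadius ρ k < b - ρ k := not_le.mp (hmin k (by omega))
    have := succ_le_sq_of_chainRadius_lt h0.ge (fun j => hpos (j + 1) j.succ_pos)
      (fun j => by simpa using hrec (j + 1) j.succ_pos) hout
    push_cast
    linarith

theorem stmt_18 (ρ : ℕ → ℝ) (h0 : ρ 0 = 0) (h1 : ρ 1 = 1)
    (hpos : ∀ j, 1 ≤ j → 0 < ρ j)
    (hrec : ∀ j, 1 ≤ j → ρ j - 1 / ρ j = ρ (j - 1))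
    (b : ℝ) (hb : 0 ≤ b) (N : ℕ) (hN : 1 ≤ N)
    (hmem : b - ρ (N - 1) ≤ (if N - 1 = 0 then 1 else min 1 (1 / ρ (N - 1))))
    (hmin : ∀ k < N - 1, ¬(b - ρ k ≤ (if k = 0 then 1 else min 1 (1 / ρ k)))) :
    (N : ℝ) ≤ b ^ 2 + 1 :=
  stmt_18_general ρ h0 hpos hrec b N hmin
end
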